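/- Let k, f, g, x0, y0, the polynomials F_i, the quantities φ_j, ψ, and the polynomials A, B, C ∈ k[p,q] be as in the context, and set h_i = (f_i·x0 + g_i)·φ2^{i−1} and l_i = f_i·φ2^i − h_i·ψ for 1 ≤ i ≤ 6 (with f5 = f6 = 0). Then, in k[p,q]: φ2³·F4(A, B, C, p, q) = c1·q² + (c2·p² + c3·p + c4)·q − (c5·p⁴ + c6·p³ + c7·p² + c8·p + c9), where c1 = φ2²φ3, c2 = −3φ2φ4, c3 = −2φ2(l1ψ + 2h1φ3), c4 = φ2(h1²ψ − 2l1h1 + l2), c5 = φ3² − φ4ψ, c6 = 2l1φ3 − 2h1φ2² − 4h1φ4 − l1ψ², c7 = h1²ψ² − 2(3h1² − h2)φ3 − (4l1h1 − l2)ψ + l1², c8 = (4h1³ − 2h1h2)ψ − 6l1h1² + 2l1h2 + 2l2h1 − l3, and c9 = 5h1⁴ − 6h1²h2 + 2h1h3 + h2² − h4. (This is the explicit defining equation of the curve C_Q(5) in the affine plane with coordinates (p,q).) -/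
import Mathlib


open Polynomial

noncomputable section

def phi2 {k : Type*} [Field k] (f0 g0 x0 : k) : k := 4 * (x0 ^ 3 + f0 * x0 + g0)

def psiC {k : Type*} [Field k] (f0 x0 : k) : k := 2 * (3 * x0 ^ 2 + f0)

def phi3 {k : Type*} [Field k] (f0 g0 x0 : k) : k :=
  3 * x0 * phi2 f0 g0 x0 - (3 * x0 ^ 2 + f0) ^ 2

def phi4 {k : Type*} [Field k] (f0 g0 x0 : k) : k :=
  psiC f0 x0 * phi3 f0 g0 x0 - (phi2 f0 g0 x0) ^ 2

def phi5 {k : Type*} [Field k] (f0 g0 x0 : k) : k :=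
  (phi2 f0 g0 x0) ^ 2 * phi4 f0 g0 x0 - (phi3 f0 g0 x0) ^ 3

def phi6 {k : Type*} [Field k] (f0 g0 x0 : k) : k :=
  phi5 f0 g0 x0 - (phi4 f0 g0 x0) ^ 2


/-- The polynomial in `t` over `k[a,b,c,p,q]` (with `a = X 0`, …, `q = X 4`) whose
coefficient of `t^n` is the polynomial `F_n ∈ k[a,b,c,p,q]`. -/
def secPolyMv {k : Type*} [Field k] (f : Fin 5 → k) (g : Fin 7 → k) (x0 y0 : k) :
    Polynomial (MvPolynomial (Fin 5) k) :=
  -(Polynomial.C (MvPolynomial.X 2) * Polynomial.X ^ 3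
      + Polynomial.C (MvPolynomial.X 1) * Polynomial.X ^ 2
      + Polynomial.C (MvPolynomial.X 0) * Polynomial.X
      + Polynomial.C (MvPolynomial.C y0)) ^ 2
    + (Polynomial.C (MvPolynomial.X 4) * Polynomial.X ^ 2
      + Polynomial.C (MvPolynomial.X 3) * Polynomial.X
      + Polynomial.C (MvPolynomial.C x0)) ^ 3
    + (∑ i : Fin 5, Polynomial.C (MvPolynomial.C (f i)) * Polynomial.X ^ (i : ℕ))
      * (Polynomial.C (MvPolynomial.X 4) * Polynomial.X ^ 2
        + Polynomial.C (MvPolynomial.X 3) * Polynomial.X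
        + Polynomial.C (MvPolynomial.C x0))
    + ∑ j : Fin 7, Polynomial.C (MvPolynomial.C (g j)) * Polynomial.X ^ (j : ℕ)

/-- `F_n ∈ k[a,b,c,p,q]`: the coefficient of `t^n` in `secPolyMv`. -/
def FMv {k : Type*} [Field k] (f : Fin 5 → k) (g : Fin 7 → k) (x0 y0 : k) (n : ℕ) :
    MvPolynomial (Fin 5) k :=
  (secPolyMv f g x0 y0).coeff n

/-- Substitution `a := A(p,q)`, `b := B(p,q)`, `c := C(p,q)`, turning a polynomial in
`k[a,b,c,p,q]` into a polynomial in `k[p,q]` (with `p = X 0`, `q = X 1`). -/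
def substABC {k : Type*} [Field k] (A B C : MvPolynomial (Fin 2) k) :
    MvPolynomial (Fin 5) k →ₐ[k] MvPolynomial (Fin 2) k :=
  MvPolynomial.aeval ![A, B, C, MvPolynomial.X 0, MvPolynomial.X 1]

/-- The coefficient `f_i` of `f`, extended by `0` for `i ≥ 5` (so `f₅ = f₆ = 0`). -/
def fco {k : Type*} [Field k] (f : Fin 5 → k) (i : ℕ) : k :=
  if h : i < 5 then f ⟨i, h⟩ else 0

/-- The coefficient `g_j` of `g`, extended by `0` for `j ≥ 7`. -/
def gco {k : Type*} [Field k] (g : Fin 7 → k) (j : ℕ) : k :=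
  if h : j < 7 then g ⟨j, h⟩ else 0

/-- `h_i = (f_i·x₀ + g_i)·φ₂^{i−1}`. -/
def hco {k : Type*} [Field k] (f : Fin 5 → k) (g : Fin 7 → k) (x0 : k) (i : ℕ) : k :=
  (fco f i * x0 + gco g i) * (phi2 (f 0) (g 0) x0) ^ (i - 1)

/-- `l_i = f_i·φ₂^i − h_i·ψ`. -/
def lco {k : Type*} [Field k] (f : Fin 5 → k) (g : Fin 7 → k) (x0 : k) (i : ℕ) : k :=
  fco f i * (phi2 (f 0) (g 0) x0) ^ i - hco f g x0 i * psiC (f 0) x0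

set_option maxHeartbeats 4000000 in
/-- **Proposition**: the explicit defining equation of the curve `C_Q(5)` in the affine
plane with coordinates `(p, q)`:
`φ₂³·F₄(A,B,C,p,q) = c₁q² + (c₂p² + c₃p + c₄)q − (c₅p⁴ + c₆p³ + c₇p² + c₈p + c₉)`. -/
theorem stmt18 (k : Type*) [Field k] (hk2 : (2 : k) ≠ 0) (hk3 : (3 : k) ≠ 0)
    (f : Fin 5 → k) (g : Fin 7 → k)
    (x0 y0 : k) (hy0 : y0 ≠ 0)
    (hQ : y0 ^ 2 = x0 ^ 3 + f 0 * x0 + g 0)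
    (A B C : MvPolynomial (Fin 2) k)
    (hA : substABC A B C (FMv f g x0 y0 1) = 0)
    (hB : substABC A B C (FMv f g x0 y0 2) = 0)
    (hC : substABC A B C (FMv f g x0 y0 3) = 0) :
    MvPolynomial.C ((phi2 (f 0) (g 0) x0) ^ 3) * substABC A B C (FMv f g x0 y0 4)
      = MvPolynomial.C ((phi2 (f 0) (g 0) x0) ^ 2 * phi3 (f 0) (g 0) x0)
          * (MvPolynomial.X 1) ^ 2
        + (MvPolynomial.C (-3 * phi2 (f 0) (g 0) x0 * phi4 (f 0) (g 0) x0)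
              * (MvPolynomial.X 0) ^ 2
            + MvPolynomial.C (-2 * phi2 (f 0) (g 0) x0
                * (lco f g x0 1 * psiC (f 0) x0 + 2 * hco f g x0 1 * phi3 (f 0) (g 0) x0))
              * MvPolynomial.X 0
            + MvPolynomial.C (phi2 (f 0) (g 0) x0
                * ((hco f g x0 1) ^ 2 * psiC (f 0) x0 - 2 * lco f g x0 1 * hco f g x0 1
                  + lco f g x0 2)))
          * MvPolynomial.X 1
        - (MvPolynomial.C ((phi3 (f 0) (g 0) x0) ^ 2
              - phi4 (f 0) (g 0) x0 * psiC (f 0) x0) * (MvPolynomial.X 0) ^ 4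
          + MvPolynomial.C (2 * lco f g x0 1 * phi3 (f 0) (g 0) x0
              - 2 * hco f g x0 1 * (phi2 (f 0) (g 0) x0) ^ 2
              - 4 * hco f g x0 1 * phi4 (f 0) (g 0) x0
              - lco f g x0 1 * (psiC (f 0) x0) ^ 2) * (MvPolynomial.X 0) ^ 3
          + MvPolynomial.C ((hco f g x0 1) ^ 2 * (psiC (f 0) x0) ^ 2
              - 2 * (3 * (hco f g x0 1) ^ 2 - hco f g x0 2) * phi3 (f 0) (g 0) x0
              - (4 * lco f g x0 1 * hco f g x0 1 - lco f g x0 2) * psiC (f 0) x0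
              + (lco f g x0 1) ^ 2) * (MvPolynomial.X 0) ^ 2
          + MvPolynomial.C ((4 * (hco f g x0 1) ^ 3 - 2 * hco f g x0 1 * hco f g x0 2)
                * psiC (f 0) x0
              - 6 * lco f g x0 1 * (hco f g x0 1) ^ 2 + 2 * lco f g x0 1 * hco f g x0 2
              + 2 * lco f g x0 2 * hco f g x0 1 - lco f g x0 3) * MvPolynomial.X 0
          + MvPolynomial.C (5 * (hco f g x0 1) ^ 4 - 6 * (hco f g x0 1) ^ 2 * hco f g x0 2
              + 2 * hco f g x0 1 * hco f g x0 3 + (hco f g x0 2) ^ 2 - hco f g x0 4)) := by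
  
  have hsec : secPolyMv f g x0 y0 =
      Polynomial.C ((MvPolynomial.C (g 0)) - (MvPolynomial.C y0)^2 + (MvPolynomial.C x0) * (MvPolynomial.C (f 0)) + (MvPolynomial.C x0)^3)
      + Polynomial.C ((MvPolynomial.C (g 1)) + (MvPolynomial.C x0) * (MvPolynomial.C (f 1)) + (MvPolynomial.X 3) * (MvPolynomial.C (f 0)) + 3 * (MvPolynomial.X 3) * (MvPolynomial.C x0)^2 - 2 * (MvPolynomial.X 0) * (MvPolynomial.C y0)) * Polynomial.X
      + Polynomial.C ((MvPolynomial.C (g 2)) + (MvPolynomial.C x0) * (MvPolynomial.C (f 2)) + (MvPolynomial.X 4) * (MvPolynomial.C (f 0)) + 3 * (MvPolynomial.X 4) * (MvPolynomial.C x0)^2 + (MvPolynomial.X 3) * (MvPolynomial.C (f 1)) + 3 * (MvPolynomial.X 3)^2 * (MvPolynomial.C x0) - 2 * (MvPolynomial.X 1) * (MvPolynomial.C y0) - (MvPolynomial.X 0)^2) * Polynomial.X ^ 2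
      + Polynomial.C ((MvPolynomial.C (g 3)) + (MvPolynomial.C x0) * (MvPolynomial.C (f 3)) + (MvPolynomial.X 4) * (MvPolynomial.C (f 1)) + (MvPolynomial.X 3) * (MvPolynomial.C (f 2)) + 6 * (MvPolynomial.X 3) * (MvPolynomial.X 4) * (MvPolynomial.C x0) + (MvPolynomial.X 3)^3 - 2 * (MvPolynomial.X 2) * (MvPolynomial.C y0) - 2 * (MvPolynomial.X 0) * (MvPolynomial.X 1)) * Polynomial.X ^ 3
      + Polynomial.C ((MvPolynomial.C (g 4)) + (MvPolynomial.C x0) * (MvPolynomial.C (f 4)) + (MvPolynomial.X 4) * (MvPolynomial.C (f 2)) + 3 * (MvPolynomial.X 4)^2 * (MvPolynomial.C x0) + (MvPolynomial.X 3) * (MvPolynomial.C (f 3)) + 3 * (MvPolynomial.X 3)^2 * (MvPolynomial.X 4) - (MvPolynomial.X 1)^2 - 2 * (MvPolynomial.X 0) * (MvPolynomial.X 2)) * Polynomial.X ^ 4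
      + Polynomial.C ((MvPolynomial.C (g 5)) + (MvPolynomial.X 4) * (MvPolynomial.C (f 3)) + (MvPolynomial.X 3) * (MvPolynomial.C (f 4)) + 3 * (MvPolynomial.X 3) * (MvPolynomial.X 4)^2 - 2 * (MvPolynomial.X 1) * (MvPolynomial.X 2)) * Polynomial.X ^ 5
      + Polynomial.C ((MvPolynomial.C (g 6)) + (MvPolynomial.X 4) * (MvPolynomial.C (f 4)) + (MvPolynomial.X 4)^3 - (MvPolynomial.X 2)^2) * Polynomial.X ^ 6 := by
    simp only [secPolyMv, Fin.sum_univ_five, Fin.sum_univ_seven, map_add, map_mul, map_pow,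
      map_neg, map_sub, map_ofNat, map_one, Fin.isValue, Fin.val_zero, Fin.val_one, Fin.val_two,
      pow_zero, pow_one,
      show ((2:Fin 5):ℕ)=2 from rfl, show ((3:Fin 5):ℕ)=3 from rfl, show ((4:Fin 5):ℕ)=4 from rfl,
      show ((2:Fin 7):ℕ)=2 from rfl, show ((3:Fin 7):ℕ)=3 from rfl, show ((4:Fin 7):ℕ)=4 from rfl,
      show ((5:Fin 7):ℕ)=5 from rfl, show ((6:Fin 7):ℕ)=6 from rfl]
    ring
  have hF1 : FMv f g x0 y0 1 = (MvPolynomial.C (g 1)) + (MvPolynomial.C x0) * (MvPolynomial.C (f 1)) + (MvPolynomial.X 3) * (MvPolynomial.C (f 0)) + 3 * (MvPolynomial.X 3) * (MvPolynomial.C x0)^2 - 2 * (MvPolynomial.X 0) * (MvPolynomial.C y0) := by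
    rw [FMv, hsec]
    simp only [Polynomial.coeff_add, Polynomial.coeff_C_mul, Polynomial.coeff_X_pow,
      Polynomial.coeff_X, Polynomial.coeff_C, mul_ite, mul_one, mul_zero]
    norm_num
  have hF2 : FMv f g x0 y0 2 = (MvPolynomial.C (g 2)) + (MvPolynomial.C x0) * (MvPolynomial.C (f 2)) + (MvPolynomial.X 4) * (MvPolynomial.C (f 0)) + 3 * (MvPolynomial.X 4) * (MvPolynomial.C x0)^2 + (MvPolynomial.X 3) * (MvPolynomial.C (f 1)) + 3 * (MvPolynomial.X 3)^2 * (MvPolynomial.C x0) - 2 * (MvPolynomial.X 1) * (MvPolynomial.C y0) - (MvPolynomial.X 0)^2 := by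
    rw [FMv, hsec]
    simp only [Polynomial.coeff_add, Polynomial.coeff_C_mul, Polynomial.coeff_X_pow,
      Polynomial.coeff_X, Polynomial.coeff_C, mul_ite, mul_one, mul_zero]
    norm_num
  have hF3 : FMv f g x0 y0 3 = (MvPolynomial.C (g 3)) + (MvPolynomial.C x0) * (MvPolynomial.C (f 3)) + (MvPolynomial.X 4) * (MvPolynomial.C (f 1)) + (MvPolynomial.X 3) * (MvPolynomial.C (f 2)) + 6 * (MvPolynomial.X 3) * (MvPolynomial.X 4) * (MvPolynomial.C x0) + (MvPolynomial.X 3)^3 - 2 * (MvPolynomial.X 2) * (MvPolynomial.C y0) - 2 * (MvPolynomial.X 0) * (MvPolynomial.X 1) := by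
    rw [FMv, hsec]
    simp only [Polynomial.coeff_add, Polynomial.coeff_C_mul, Polynomial.coeff_X_pow,
      Polynomial.coeff_X, Polynomial.coeff_C, mul_ite, mul_one, mul_zero]
    norm_num
  have hF4 : FMv f g x0 y0 4 = (MvPolynomial.C (g 4)) + (MvPolynomial.C x0) * (MvPolynomial.C (f 4)) + (MvPolynomial.X 4) * (MvPolynomial.C (f 2)) + 3 * (MvPolynomial.X 4)^2 * (MvPolynomial.C x0) + (MvPolynomial.X 3) * (MvPolynomial.C (f 3)) + 3 * (MvPolynomial.X 3)^2 * (MvPolynomial.X 4) - (MvPolynomial.X 1)^2 - 2 * (MvPolynomial.X 0) * (MvPolynomial.X 2) := by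
    rw [FMv, hsec]
    simp only [Polynomial.coeff_add, Polynomial.coeff_C_mul, Polynomial.coeff_X_pow,
      Polynomial.coeff_X, Polynomial.coeff_C, mul_ite, mul_one, mul_zero]
    norm_num
  have hA' : ((MvPolynomial.C (g 1)) + (MvPolynomial.C x0) * (MvPolynomial.C (f 1)) + (MvPolynomial.X 0) * (MvPolynomial.C (f 0)) + 3 * (MvPolynomial.X 0) * (MvPolynomial.C x0)^2 - 2 * A * (MvPolynomial.C y0)) = 0 := by
    rw [← hA, hF1]
    simp only [substABC, map_add, map_mul, map_pow, map_neg, map_sub, map_ofNat, map_one,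
      MvPolynomial.aeval_X, MvPolynomial.aeval_C, MvPolynomial.algebraMap_eq,
      Matrix.cons_val_zero, Matrix.cons_val_one, Matrix.head_cons, Fin.isValue,
      Matrix.cons_val_two, Matrix.tail_cons, Matrix.cons_val_three, Matrix.cons_val_four]
    try ring
  have hB' : ((MvPolynomial.C (g 2)) + (MvPolynomial.C x0) * (MvPolynomial.C (f 2)) + (MvPolynomial.X 1) * (MvPolynomial.C (f 0)) + 3 * (MvPolynomial.X 1) * (MvPolynomial.C x0)^2 + (MvPolynomial.X 0) * (MvPolynomial.C (f 1)) + 3 * (MvPolynomial.X 0)^2 * (MvPolynomial.C x0) - 2 * B * (MvPolynomial.C y0) - A^2) = 0 := by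
    rw [← hB, hF2]
    simp only [substABC, map_add, map_mul, map_pow, map_neg, map_sub, map_ofNat, map_one,
      MvPolynomial.aeval_X, MvPolynomial.aeval_C, MvPolynomial.algebraMap_eq,
      Matrix.cons_val_zero, Matrix.cons_val_one, Matrix.head_cons, Fin.isValue,
      Matrix.cons_val_two, Matrix.tail_cons, Matrix.cons_val_three, Matrix.cons_val_four]
    try ring
  have hC' : ((MvPolynomial.C (g 3)) + (MvPolynomial.C x0) * (MvPolynomial.C (f 3)) + (MvPolynomial.X 1) * (MvPolynomial.C (f 1)) + (MvPolynomial.X 0) * (MvPolynomial.C (f 2)) + 6 * (MvPolynomial.X 0) * (MvPolynomial.X 1) * (MvPolynomial.C x0) + (MvPolynomial.X 0)^3 - 2 * C * (MvPolynomial.C y0) - 2 * A * B) = 0 := by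
    rw [← hC, hF3]
    simp only [substABC, map_add, map_mul, map_pow, map_neg, map_sub, map_ofNat, map_one,
      MvPolynomial.aeval_X, MvPolynomial.aeval_C, MvPolynomial.algebraMap_eq,
      Matrix.cons_val_zero, Matrix.cons_val_one, Matrix.head_cons, Fin.isValue,
      Matrix.cons_val_two, Matrix.tail_cons, Matrix.cons_val_three, Matrix.cons_val_four]
    try ring
  have hQ2 : (MvPolynomial.C y0 : MvPolynomial (Fin 2) k) ^ 2
      = MvPolynomial.C x0 ^ 3 + MvPolynomial.C (f 0) * MvPolynomial.C x0
        + MvPolynomial.C (g 0) := by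
    rw [← map_pow, hQ]; simp [map_add, map_mul, map_pow]
  rw [hF4]
  simp only [substABC, phi2, psiC, phi3, phi4, hco, lco,
    show fco f 1 = f 1 from rfl, show fco f 2 = f 2 from rfl,
    show fco f 3 = f 3 from rfl, show fco f 4 = f 4 from rfl,
    show gco g 1 = g 1 from rfl, show gco g 2 = g 2 from rfl,
    show gco g 3 = g 3 from rfl, show gco g 4 = g 4 from rfl,
    show (1-1 : ℕ) = 0 from rfl, show (2-1 : ℕ) = 1 from rfl,
    show (3-1 : ℕ) = 2 from rfl, show (4-1 : ℕ) = 3 from rfl,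
    pow_zero, pow_one, map_add, map_mul, map_pow, map_neg, map_sub, map_ofNat, map_one,
    MvPolynomial.aeval_X, MvPolynomial.aeval_C, MvPolynomial.algebraMap_eq,
    Matrix.cons_val_zero, Matrix.cons_val_one, Matrix.head_cons, Fin.isValue,
    Matrix.cons_val_two, Matrix.tail_cons, Matrix.cons_val_three, Matrix.cons_val_four]
  linear_combination (5 * (MvPolynomial.C (g 1))^3 + 15 * (MvPolynomial.C x0) * (MvPolynomial.C (f 1)) * (MvPolynomial.C (g 1))^2 + 15 * (MvPolynomial.C x0)^2 * (MvPolynomial.C (f 1))^2 * (MvPolynomial.C (g 1)) + 5 * (MvPolynomial.C x0)^3 * (MvPolynomial.C (f 1))^3 + 15 * (MvPolynomial.X 0) * (MvPolynomial.C (f 0)) * (MvPolynomial.C (g 1))^2 + 30 * (MvPolynomial.X 0) * (MvPolynomial.C x0) * (MvPolynomial.C (f 0)) * (MvPolynomial.C (f 1)) * (MvPolynomial.C (g 1)) + 45 * (MvPolynomial.X 0) * (MvPolynomial.C x0)^2 * (MvPolynomial.C (g 1))^2 + 15 * (MvPolynomial.X 0) * (MvPolynomial.C x0)^2 * (MvPolynomial.C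 (f 0)) * (MvPolynomial.C (f 1))^2 + 90 * (MvPolynomial.X 0) * (MvPolynomial.C x0)^3 * (MvPolynomial.C (f 1)) * (MvPolynomial.C (g 1)) + 45 * (MvPolynomial.X 0) * (MvPolynomial.C x0)^4 * (MvPolynomial.C (f 1))^2 + 15 * (MvPolynomial.X 0)^2 * (MvPolynomial.C (f 0))^2 * (MvPolynomial.C (g 1)) + 15 * (MvPolynomial.X 0)^2 * (MvPolynomial.C x0) * (MvPolynomial.C (f 0))^2 * (MvPolynomial.C (f 1)) + 90 * (MvPolynomial.X 0)^2 * (MvPolynomial.C x0)^2 * (MvPolynomial.C (f 0)) * (MvPolynomial.C (g 1)) + 90 * (MvPolynomial.X 0)^2 * (MvPolynomial.C x0)^3 * (MvPolynomial.C (f 0)) * (MvPolynomial.C (f 1)) + 135 * (MvPolynomial.X 0)^2 * (MvPolynomial.C x0)^4 * (MvPolynomial.C (g 1)) + 135 * (MvPolynomial.X 0)^2 * (MvPolynomial.C x0)^5 * (MvPolynomial.C (f 1)) + 5 * (MvPolynomial.X 0)^3 * (MvPolynomial.C (f 0))^3 + 45 * (MvPolynomial.X 0)^3 * (MvPolynomial.C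 x0)^2 * (MvPolynomial.C (f 0))^2 + 135 * (MvPolynomial.X 0)^3 * (MvPolynomial.C x0)^4 * (MvPolynomial.C (f 0)) + 135 * (MvPolynomial.X 0)^3 * (MvPolynomial.C x0)^6 + 64 * C * (MvPolynomial.C y0)^5 - 48 * B * (MvPolynomial.C y0)^3 * (MvPolynomial.C (g 1)) - 48 * B * (MvPolynomial.C x0) * (MvPolynomial.C y0)^3 * (MvPolynomial.C (f 1)) - 48 * B * (MvPolynomial.X 0) * (MvPolynomial.C y0)^3 * (MvPolynomial.C (f 0)) - 144 * B * (MvPolynomial.X 0) * (MvPolynomial.C x0)^2 * (MvPolynomial.C y0)^3 + 10 * A * (MvPolynomial.C y0) * (MvPolynomial.C (g 1))^2 + 20 * A * (MvPolynomial.C x0) * (MvPolynomial.C y0) * (MvPolynomial.C (f 1)) * (MvPolynomial.C (g 1)) + 10 * A * (MvPolynomial.C x0)^2 * (MvPolynomial.C y0) * (MvPolynomial.C (f 1))^2 + 20 * A * (MvPolynomial.X 0) * (MvPolynomial.C y0) * (MvPolynomial.C (f 0)) * (MvPolynomial.C (g 1)) + 20 * A * (MvPolynomial.X 0) * (MvPolynomial.C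 x0) * (MvPolynomial.C y0) * (MvPolynomial.C (f 0)) * (MvPolynomial.C (f 1)) + 60 * A * (MvPolynomial.X 0) * (MvPolynomial.C x0)^2 * (MvPolynomial.C y0) * (MvPolynomial.C (g 1)) + 60 * A * (MvPolynomial.X 0) * (MvPolynomial.C x0)^3 * (MvPolynomial.C y0) * (MvPolynomial.C (f 1)) + 10 * A * (MvPolynomial.X 0)^2 * (MvPolynomial.C y0) * (MvPolynomial.C (f 0))^2 + 60 * A * (MvPolynomial.X 0)^2 * (MvPolynomial.C x0)^2 * (MvPolynomial.C y0) * (MvPolynomial.C (f 0)) + 90 * A * (MvPolynomial.X 0)^2 * (MvPolynomial.C x0)^4 * (MvPolynomial.C y0) - 32 * A * B * (MvPolynomial.C y0)^4 - 4 * A^2 * (MvPolynomial.C y0)^2 * (MvPolynomial.C (g 1)) - 4 * A^2 * (MvPolynomial.C x0) * (MvPolynomial.C y0)^2 * (MvPolynomial.C (f 1)) - 4 * A^2 * (MvPolynomial.X 0) * (MvPolynomial.C y0)^2 * (MvPolynomial.C (f 0)) - 12 * A^2 * (MvPolynomial.X 0) * (MvPolynomial.C x0)^2 * (MvPolynomial.C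 y0)^2 - 8 * A^3 * (MvPolynomial.C y0)^3) * hA' + (-24 * (MvPolynomial.C y0)^2 * (MvPolynomial.C (g 1))^2 + 16 * (MvPolynomial.C y0)^4 * (MvPolynomial.C (g 2)) - 48 * (MvPolynomial.C x0) * (MvPolynomial.C y0)^2 * (MvPolynomial.C (f 1)) * (MvPolynomial.C (g 1)) + 16 * (MvPolynomial.C x0) * (MvPolynomial.C y0)^4 * (MvPolynomial.C (f 2)) - 24 * (MvPolynomial.C x0)^2 * (MvPolynomial.C y0)^2 * (MvPolynomial.C (f 1))^2 + 16 * (MvPolynomial.X 1) * (MvPolynomial.C y0)^4 * (MvPolynomial.C (f 0)) + 48 * (MvPolynomial.X 1) * (MvPolynomial.C x0)^2 * (MvPolynomial.C y0)^4 - 48 * (MvPolynomial.X 0) * (MvPolynomial.C y0)^2 * (MvPolynomial.C (f 0)) * (MvPolynomial.C (g 1)) + 16 * (MvPolynomial.X 0) * (MvPolynomial.C y0)^4 * (MvPolynomial.C (f 1)) - 48 * (MvPolynomial.X 0) * (MvPolynomial.C x0) * (MvPolynomial.C y0)^2 * (MvPolynomial.C (f 0)) * (MvPolynomial.C (f 1))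 - 144 * (MvPolynomial.X 0) * (MvPolynomial.C x0)^2 * (MvPolynomial.C y0)^2 * (MvPolynomial.C (g 1)) - 144 * (MvPolynomial.X 0) * (MvPolynomial.C x0)^3 * (MvPolynomial.C y0)^2 * (MvPolynomial.C (f 1)) - 24 * (MvPolynomial.X 0)^2 * (MvPolynomial.C y0)^2 * (MvPolynomial.C (f 0))^2 + 48 * (MvPolynomial.X 0)^2 * (MvPolynomial.C x0) * (MvPolynomial.C y0)^4 - 144 * (MvPolynomial.X 0)^2 * (MvPolynomial.C x0)^2 * (MvPolynomial.C y0)^2 * (MvPolynomial.C (f 0)) - 216 * (MvPolynomial.X 0)^2 * (MvPolynomial.C x0)^4 * (MvPolynomial.C y0)^2 + 32 * B * (MvPolynomial.C y0)^5 + 16 * A^2 * (MvPolynomial.C y0)^4) * hB' + (32 * (MvPolynomial.C y0)^4 * (MvPolynomial.C (g 1)) + 32 * (MvPolynomial.C x0) * (MvPolynomial.C y0)^4 * (MvPolynomial.C (f 1)) + 32 * (MvPolynomial.X 0) * (MvPolynomial.C y0)^4 * (MvPolynomial.C (f 0)) + 96 * (MvPolynomial.X 0) * (MvPolynomial.C x0)^2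 * (MvPolynomial.C y0)^4) * hC' + (24 * (MvPolynomial.C (g 1))^2 * (MvPolynomial.C (g 2)) - 16 * (MvPolynomial.C (g 0)) * (MvPolynomial.C (g 2))^2 - 32 * (MvPolynomial.C (g 0)) * (MvPolynomial.C (g 1)) * (MvPolynomial.C (g 3)) - 16 * (MvPolynomial.C y0)^2 * (MvPolynomial.C (g 2))^2 - 32 * (MvPolynomial.C y0)^2 * (MvPolynomial.C (g 1)) * (MvPolynomial.C (g 3)) - 32 * (MvPolynomial.C x0) * (MvPolynomial.C (f 3)) * (MvPolynomial.C (g 0)) * (MvPolynomial.C (g 1)) + 24 * (MvPolynomial.C x0) * (MvPolynomial.C (f 2)) * (MvPolynomial.C (g 1))^2 - 32 * (MvPolynomial.C x0) * (MvPolynomial.C (f 2)) * (MvPolynomial.C (g 0)) * (MvPolynomial.C (g 2)) + 48 * (MvPolynomial.C x0) * (MvPolynomial.C (f 1)) * (MvPolynomial.C (g 1)) * (MvPolynomial.C (g 2)) - 32 * (MvPolynomial.C x0) * (MvPolynomial.C (f 1)) * (MvPolynomial.C (g 0)) * (MvPolynomial.C (g 3)) - 16 * (MvPolynomial.C x0)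 * (MvPolynomial.C (f 0)) * (MvPolynomial.C (g 2))^2 - 32 * (MvPolynomial.C x0) * (MvPolynomial.C (f 0)) * (MvPolynomial.C (g 1)) * (MvPolynomial.C (g 3)) - 32 * (MvPolynomial.C x0) * (MvPolynomial.C y0)^2 * (MvPolynomial.C (f 3)) * (MvPolynomial.C (g 1)) - 32 * (MvPolynomial.C x0) * (MvPolynomial.C y0)^2 * (MvPolynomial.C (f 2)) * (MvPolynomial.C (g 2)) - 32 * (MvPolynomial.C x0) * (MvPolynomial.C y0)^2 * (MvPolynomial.C (f 1)) * (MvPolynomial.C (g 3)) - 16 * (MvPolynomial.C x0)^2 * (MvPolynomial.C (f 2))^2 * (MvPolynomial.C (g 0)) - 32 * (MvPolynomial.C x0)^2 * (MvPolynomial.C (f 1)) * (MvPolynomial.C (f 3)) * (MvPolynomial.C (g 0)) + 48 * (MvPolynomial.C x0)^2 * (MvPolynomial.C (f 1)) * (MvPolynomial.C (f 2)) * (MvPolynomial.C (g 1)) + 24 * (MvPolynomial.C x0)^2 * (MvPolynomial.C (f 1))^2 * (MvPolynomial.C (g 2)) - 32 * (MvPolynomial.C x0)^2 * (MvPolynomial.C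 (f 0)) * (MvPolynomial.C (f 3)) * (MvPolynomial.C (g 1)) - 32 * (MvPolynomial.C x0)^2 * (MvPolynomial.C (f 0)) * (MvPolynomial.C (f 2)) * (MvPolynomial.C (g 2)) - 32 * (MvPolynomial.C x0)^2 * (MvPolynomial.C (f 0)) * (MvPolynomial.C (f 1)) * (MvPolynomial.C (g 3)) - 16 * (MvPolynomial.C x0)^2 * (MvPolynomial.C y0)^2 * (MvPolynomial.C (f 2))^2 - 32 * (MvPolynomial.C x0)^2 * (MvPolynomial.C y0)^2 * (MvPolynomial.C (f 1)) * (MvPolynomial.C (f 3)) - 16 * (MvPolynomial.C x0)^3 * (MvPolynomial.C (g 2))^2 - 32 * (MvPolynomial.C x0)^3 * (MvPolynomial.C (g 1)) * (MvPolynomial.C (g 3)) + 24 * (MvPolynomial.C x0)^3 * (MvPolynomial.C (f 1))^2 * (MvPolynomial.C (f 2)) - 16 * (MvPolynomial.C x0)^3 * (MvPolynomial.C (f 0)) * (MvPolynomial.C (f 2))^2 - 32 * (MvPolynomial.C x0)^3 * (MvPolynomial.C (f 0)) * (MvPolynomial.C (f 1)) * (MvPolynomial.C (f 3)) - 32 *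 (MvPolynomial.C x0)^4 * (MvPolynomial.C (f 3)) * (MvPolynomial.C (g 1)) - 32 * (MvPolynomial.C x0)^4 * (MvPolynomial.C (f 2)) * (MvPolynomial.C (g 2)) - 32 * (MvPolynomial.C x0)^4 * (MvPolynomial.C (f 1)) * (MvPolynomial.C (g 3)) - 16 * (MvPolynomial.C x0)^5 * (MvPolynomial.C (f 2))^2 - 32 * (MvPolynomial.C x0)^5 * (MvPolynomial.C (f 1)) * (MvPolynomial.C (f 3)) - 32 * (MvPolynomial.X 1) * (MvPolynomial.C (f 1)) * (MvPolynomial.C (g 0)) * (MvPolynomial.C (g 1)) + 24 * (MvPolynomial.X 1) * (MvPolynomial.C (f 0)) * (MvPolynomial.C (g 1))^2 - 32 * (MvPolynomial.X 1) * (MvPolynomial.C (f 0)) * (MvPolynomial.C (g 0)) * (MvPolynomial.C (g 2)) - 32 * (MvPolynomial.X 1) * (MvPolynomial.C y0)^2 * (MvPolynomial.C (f 1)) * (MvPolynomial.C (g 1)) - 32 * (MvPolynomial.X 1) * (MvPolynomial.C y0)^2 * (MvPolynomial.C (f 0)) * (MvPolynomial.C (g 2)) - 32 * (MvPolynomial.X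 1) * (MvPolynomial.C x0) * (MvPolynomial.C (f 1))^2 * (MvPolynomial.C (g 0)) - 32 * (MvPolynomial.X 1) * (MvPolynomial.C x0) * (MvPolynomial.C (f 0)) * (MvPolynomial.C (f 2)) * (MvPolynomial.C (g 0)) + 16 * (MvPolynomial.X 1) * (MvPolynomial.C x0) * (MvPolynomial.C (f 0)) * (MvPolynomial.C (f 1)) * (MvPolynomial.C (g 1)) - 32 * (MvPolynomial.X 1) * (MvPolynomial.C x0) * (MvPolynomial.C (f 0))^2 * (MvPolynomial.C (g 2)) - 32 * (MvPolynomial.X 1) * (MvPolynomial.C x0) * (MvPolynomial.C y0)^2 * (MvPolynomial.C (f 1))^2 - 32 * (MvPolynomial.X 1) * (MvPolynomial.C x0) * (MvPolynomial.C y0)^2 * (MvPolynomial.C (f 0)) * (MvPolynomial.C (f 2)) + 72 * (MvPolynomial.X 1) * (MvPolynomial.C x0)^2 * (MvPolynomial.C (g 1))^2 - 96 * (MvPolynomial.X 1) * (MvPolynomial.C x0)^2 * (MvPolynomial.C (g 0)) * (MvPolynomial.C (g 2)) - 8 * (MvPolynomial.X 1) * (MvPolynomial.C x0)^2 * (MvPolynomial.C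 (f 0)) * (MvPolynomial.C (f 1))^2 - 32 * (MvPolynomial.X 1) * (MvPolynomial.C x0)^2 * (MvPolynomial.C (f 0))^2 * (MvPolynomial.C (f 2)) - 96 * (MvPolynomial.X 1) * (MvPolynomial.C x0)^2 * (MvPolynomial.C y0)^2 * (MvPolynomial.C (g 2)) - 96 * (MvPolynomial.X 1) * (MvPolynomial.C x0)^3 * (MvPolynomial.C (f 2)) * (MvPolynomial.C (g 0)) + 112 * (MvPolynomial.X 1) * (MvPolynomial.C x0)^3 * (MvPolynomial.C (f 1)) * (MvPolynomial.C (g 1)) - 128 * (MvPolynomial.X 1) * (MvPolynomial.C x0)^3 * (MvPolynomial.C (f 0)) * (MvPolynomial.C (g 2)) - 96 * (MvPolynomial.X 1) * (MvPolynomial.C x0)^3 * (MvPolynomial.C y0)^2 * (MvPolynomial.C (f 2)) + 40 * (MvPolynomial.X 1) * (MvPolynomial.C x0)^4 * (MvPolynomial.C (f 1))^2 - 128 * (MvPolynomial.X 1) * (MvPolynomial.C x0)^4 * (MvPolynomial.C (f 0)) * (MvPolynomial.C (f 2)) - 96 * (MvPolynomial.X 1) * (MvPolynomial.C x0)^5 *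 (MvPolynomial.C (g 2)) - 96 * (MvPolynomial.X 1) * (MvPolynomial.C x0)^6 * (MvPolynomial.C (f 2)) - 16 * (MvPolynomial.X 1)^2 * (MvPolynomial.C (f 0))^2 * (MvPolynomial.C (g 0)) - 16 * (MvPolynomial.X 1)^2 * (MvPolynomial.C y0)^2 * (MvPolynomial.C (f 0))^2 - 16 * (MvPolynomial.X 1)^2 * (MvPolynomial.C x0) * (MvPolynomial.C (f 0))^3 - 96 * (MvPolynomial.X 1)^2 * (MvPolynomial.C x0)^2 * (MvPolynomial.C (f 0)) * (MvPolynomial.C (g 0)) - 96 * (MvPolynomial.X 1)^2 * (MvPolynomial.C x0)^2 * (MvPolynomial.C y0)^2 * (MvPolynomial.C (f 0)) - 112 * (MvPolynomial.X 1)^2 * (MvPolynomial.C x0)^3 * (MvPolynomial.C (f 0))^2 - 144 * (MvPolynomial.X 1)^2 * (MvPolynomial.C x0)^4 * (MvPolynomial.C (g 0)) - 144 * (MvPolynomial.X 1)^2 * (MvPolynomial.C x0)^4 * (MvPolynomial.C y0)^2 - 240 * (MvPolynomial.X 1)^2 * (MvPolynomial.C x0)^5 * (MvPolynomial.C (f 0))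 - 144 * (MvPolynomial.X 1)^2 * (MvPolynomial.C x0)^7 - 32 * (MvPolynomial.X 0) * (MvPolynomial.C (f 2)) * (MvPolynomial.C (g 0)) * (MvPolynomial.C (g 1)) + 24 * (MvPolynomial.X 0) * (MvPolynomial.C (f 1)) * (MvPolynomial.C (g 1))^2 - 32 * (MvPolynomial.X 0) * (MvPolynomial.C (f 1)) * (MvPolynomial.C (g 0)) * (MvPolynomial.C (g 2)) + 48 * (MvPolynomial.X 0) * (MvPolynomial.C (f 0)) * (MvPolynomial.C (g 1)) * (MvPolynomial.C (g 2)) - 32 * (MvPolynomial.X 0) * (MvPolynomial.C (f 0)) * (MvPolynomial.C (g 0)) * (MvPolynomial.C (g 3)) - 32 * (MvPolynomial.X 0) * (MvPolynomial.C y0)^2 * (MvPolynomial.C (f 2)) * (MvPolynomial.C (g 1)) - 32 * (MvPolynomial.X 0) * (MvPolynomial.C y0)^2 * (MvPolynomial.C (f 1)) * (MvPolynomial.C (g 2)) - 32 * (MvPolynomial.X 0) * (MvPolynomial.C y0)^2 * (MvPolynomial.C (f 0)) * (MvPolynomial.C (g 3)) - 64 * (MvPolynomial.X 0) * (MvPolynomial.C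 x0) * (MvPolynomial.C (f 1)) * (MvPolynomial.C (f 2)) * (MvPolynomial.C (g 0)) + 48 * (MvPolynomial.X 0) * (MvPolynomial.C x0) * (MvPolynomial.C (f 1))^2 * (MvPolynomial.C (g 1)) - 32 * (MvPolynomial.X 0) * (MvPolynomial.C x0) * (MvPolynomial.C (f 0)) * (MvPolynomial.C (f 3)) * (MvPolynomial.C (g 0)) + 16 * (MvPolynomial.X 0) * (MvPolynomial.C x0) * (MvPolynomial.C (f 0)) * (MvPolynomial.C (f 2)) * (MvPolynomial.C (g 1)) + 16 * (MvPolynomial.X 0) * (MvPolynomial.C x0) * (MvPolynomial.C (f 0)) * (MvPolynomial.C (f 1)) * (MvPolynomial.C (g 2)) - 32 * (MvPolynomial.X 0) * (MvPolynomial.C x0) * (MvPolynomial.C (f 0))^2 * (MvPolynomial.C (g 3)) - 64 * (MvPolynomial.X 0) * (MvPolynomial.C x0) * (MvPolynomial.C y0)^2 * (MvPolynomial.C (f 1)) * (MvPolynomial.C (f 2)) - 32 * (MvPolynomial.X 0) * (MvPolynomial.C x0) * (MvPolynomial.C y0)^2 * (MvPolynomial.C (f 0)) * (MvPolynomial.C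 (f 3)) + 144 * (MvPolynomial.X 0) * (MvPolynomial.C x0)^2 * (MvPolynomial.C (g 1)) * (MvPolynomial.C (g 2)) - 96 * (MvPolynomial.X 0) * (MvPolynomial.C x0)^2 * (MvPolynomial.C (g 0)) * (MvPolynomial.C (g 3)) + 24 * (MvPolynomial.X 0) * (MvPolynomial.C x0)^2 * (MvPolynomial.C (f 1))^3 - 16 * (MvPolynomial.X 0) * (MvPolynomial.C x0)^2 * (MvPolynomial.C (f 0)) * (MvPolynomial.C (f 1)) * (MvPolynomial.C (f 2)) - 32 * (MvPolynomial.X 0) * (MvPolynomial.C x0)^2 * (MvPolynomial.C (f 0))^2 * (MvPolynomial.C (f 3)) - 96 * (MvPolynomial.X 0) * (MvPolynomial.C x0)^2 * (MvPolynomial.C y0)^2 * (MvPolynomial.C (g 3)) - 96 * (MvPolynomial.X 0) * (MvPolynomial.C x0)^3 * (MvPolynomial.C (f 3)) * (MvPolynomial.C (g 0)) + 112 * (MvPolynomial.X 0) * (MvPolynomial.C x0)^3 * (MvPolynomial.C (f 2)) * (MvPolynomial.C (g 1)) + 112 * (MvPolynomial.X 0) * (MvPolynomial.C x0)^3 * (MvPolynomial.C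 (f 1)) * (MvPolynomial.C (g 2)) - 128 * (MvPolynomial.X 0) * (MvPolynomial.C x0)^3 * (MvPolynomial.C (f 0)) * (MvPolynomial.C (g 3)) - 96 * (MvPolynomial.X 0) * (MvPolynomial.C x0)^3 * (MvPolynomial.C y0)^2 * (MvPolynomial.C (f 3)) + 80 * (MvPolynomial.X 0) * (MvPolynomial.C x0)^4 * (MvPolynomial.C (f 1)) * (MvPolynomial.C (f 2)) - 128 * (MvPolynomial.X 0) * (MvPolynomial.C x0)^4 * (MvPolynomial.C (f 0)) * (MvPolynomial.C (f 3)) - 96 * (MvPolynomial.X 0) * (MvPolynomial.C x0)^5 * (MvPolynomial.C (g 3)) - 96 * (MvPolynomial.X 0) * (MvPolynomial.C x0)^6 * (MvPolynomial.C (f 3)) - 64 * (MvPolynomial.X 0) * (MvPolynomial.X 1) * (MvPolynomial.C (f 0)) * (MvPolynomial.C (f 1)) * (MvPolynomial.C (g 0)) + 48 * (MvPolynomial.X 0) * (MvPolynomial.X 1) * (MvPolynomial.C (f 0))^2 * (MvPolynomial.C (g 1)) - 64 * (MvPolynomial.X 0) * (MvPolynomial.X 1) * (MvPolynomial.C y0)^2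 * (MvPolynomial.C (f 0)) * (MvPolynomial.C (f 1)) - 192 * (MvPolynomial.X 0) * (MvPolynomial.X 1) * (MvPolynomial.C x0) * (MvPolynomial.C (g 0)) * (MvPolynomial.C (g 1)) - 16 * (MvPolynomial.X 0) * (MvPolynomial.X 1) * (MvPolynomial.C x0) * (MvPolynomial.C (f 0))^2 * (MvPolynomial.C (f 1)) - 192 * (MvPolynomial.X 0) * (MvPolynomial.X 1) * (MvPolynomial.C x0) * (MvPolynomial.C y0)^2 * (MvPolynomial.C (g 1)) - 384 * (MvPolynomial.X 0) * (MvPolynomial.X 1) * (MvPolynomial.C x0)^2 * (MvPolynomial.C (f 1)) * (MvPolynomial.C (g 0)) + 96 * (MvPolynomial.X 0) * (MvPolynomial.X 1) * (MvPolynomial.C x0)^2 * (MvPolynomial.C (f 0)) * (MvPolynomial.C (g 1)) - 384 * (MvPolynomial.X 0) * (MvPolynomial.X 1) * (MvPolynomial.C x0)^2 * (MvPolynomial.C y0)^2 * (MvPolynomial.C (f 1)) - 160 * (MvPolynomial.X 0) * (MvPolynomial.X 1) * (MvPolynomial.C x0)^3 * (MvPolynomial.C (f 0)) * (MvPolynomial.C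 (f 1)) + 240 * (MvPolynomial.X 0) * (MvPolynomial.X 1) * (MvPolynomial.C x0)^4 * (MvPolynomial.C (g 1)) + 48 * (MvPolynomial.X 0) * (MvPolynomial.X 1) * (MvPolynomial.C x0)^5 * (MvPolynomial.C (f 1)) - 16 * (MvPolynomial.X 0)^2 * (MvPolynomial.C (f 1))^2 * (MvPolynomial.C (g 0)) - 32 * (MvPolynomial.X 0)^2 * (MvPolynomial.C (f 0)) * (MvPolynomial.C (f 2)) * (MvPolynomial.C (g 0)) + 48 * (MvPolynomial.X 0)^2 * (MvPolynomial.C (f 0)) * (MvPolynomial.C (f 1)) * (MvPolynomial.C (g 1)) + 24 * (MvPolynomial.X 0)^2 * (MvPolynomial.C (f 0))^2 * (MvPolynomial.C (g 2)) - 16 * (MvPolynomial.X 0)^2 * (MvPolynomial.C y0)^2 * (MvPolynomial.C (f 1))^2 - 32 * (MvPolynomial.X 0)^2 * (MvPolynomial.C y0)^2 * (MvPolynomial.C (f 0)) * (MvPolynomial.C (f 2)) + 72 * (MvPolynomial.X 0)^2 * (MvPolynomial.C x0) * (MvPolynomial.C (g 1))^2 - 96 * (MvPolynomial.X 0)^2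 * (MvPolynomial.C x0) * (MvPolynomial.C (g 0)) * (MvPolynomial.C (g 2)) + 32 * (MvPolynomial.X 0)^2 * (MvPolynomial.C x0) * (MvPolynomial.C (f 0)) * (MvPolynomial.C (f 1))^2 - 8 * (MvPolynomial.X 0)^2 * (MvPolynomial.C x0) * (MvPolynomial.C (f 0))^2 * (MvPolynomial.C (f 2)) - 96 * (MvPolynomial.X 0)^2 * (MvPolynomial.C x0) * (MvPolynomial.C y0)^2 * (MvPolynomial.C (g 2)) - 192 * (MvPolynomial.X 0)^2 * (MvPolynomial.C x0)^2 * (MvPolynomial.C (f 2)) * (MvPolynomial.C (g 0)) + 288 * (MvPolynomial.X 0)^2 * (MvPolynomial.C x0)^2 * (MvPolynomial.C (f 1)) * (MvPolynomial.C (g 1)) + 48 * (MvPolynomial.X 0)^2 * (MvPolynomial.C x0)^2 * (MvPolynomial.C (f 0)) * (MvPolynomial.C (g 2)) - 192 * (MvPolynomial.X 0)^2 * (MvPolynomial.C x0)^2 * (MvPolynomial.C y0)^2 * (MvPolynomial.C (f 2)) + 200 * (MvPolynomial.X 0)^2 * (MvPolynomial.C x0)^3 * (MvPolynomial.C (f 1))^2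 - 80 * (MvPolynomial.X 0)^2 * (MvPolynomial.C x0)^3 * (MvPolynomial.C (f 0)) * (MvPolynomial.C (f 2)) + 120 * (MvPolynomial.X 0)^2 * (MvPolynomial.C x0)^4 * (MvPolynomial.C (g 2)) + 24 * (MvPolynomial.X 0)^2 * (MvPolynomial.C x0)^5 * (MvPolynomial.C (f 2)) + 24 * (MvPolynomial.X 0)^2 * (MvPolynomial.X 1) * (MvPolynomial.C (f 0))^3 - 288 * (MvPolynomial.X 0)^2 * (MvPolynomial.X 1) * (MvPolynomial.C x0) * (MvPolynomial.C (f 0)) * (MvPolynomial.C (g 0)) - 288 * (MvPolynomial.X 0)^2 * (MvPolynomial.X 1) * (MvPolynomial.C x0) * (MvPolynomial.C y0)^2 * (MvPolynomial.C (f 0)) - 72 * (MvPolynomial.X 0)^2 * (MvPolynomial.X 1) * (MvPolynomial.C x0)^2 * (MvPolynomial.C (f 0))^2 - 864 * (MvPolynomial.X 0)^2 * (MvPolynomial.X 1) * (MvPolynomial.C x0)^3 * (MvPolynomial.C (g 0)) - 864 * (MvPolynomial.X 0)^2 * (MvPolynomial.X 1) * (MvPolynomial.C x0)^3 * (MvPolynomial.C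 y0)^2 - 504 * (MvPolynomial.X 0)^2 * (MvPolynomial.X 1) * (MvPolynomial.C x0)^4 * (MvPolynomial.C (f 0)) - 216 * (MvPolynomial.X 0)^2 * (MvPolynomial.X 1) * (MvPolynomial.C x0)^6 - 32 * (MvPolynomial.X 0)^3 * (MvPolynomial.C (g 0)) * (MvPolynomial.C (g 1)) + 24 * (MvPolynomial.X 0)^3 * (MvPolynomial.C (f 0))^2 * (MvPolynomial.C (f 1)) - 32 * (MvPolynomial.X 0)^3 * (MvPolynomial.C y0)^2 * (MvPolynomial.C (g 1)) - 128 * (MvPolynomial.X 0)^3 * (MvPolynomial.C x0) * (MvPolynomial.C (f 1)) * (MvPolynomial.C (g 0)) + 112 * (MvPolynomial.X 0)^3 * (MvPolynomial.C x0) * (MvPolynomial.C (f 0)) * (MvPolynomial.C (g 1)) - 128 * (MvPolynomial.X 0)^3 * (MvPolynomial.C x0) * (MvPolynomial.C y0)^2 * (MvPolynomial.C (f 1)) + 160 * (MvPolynomial.X 0)^3 * (MvPolynomial.C x0)^2 * (MvPolynomial.C (f 0)) * (MvPolynomial.C (f 1)) + 400 * (MvPolynomial.X 0)^3 * (MvPolynomial.C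 x0)^3 * (MvPolynomial.C (g 1)) + 520 * (MvPolynomial.X 0)^3 * (MvPolynomial.C x0)^4 * (MvPolynomial.C (f 1)) - 32 * (MvPolynomial.X 0)^4 * (MvPolynomial.C (f 0)) * (MvPolynomial.C (g 0)) - 32 * (MvPolynomial.X 0)^4 * (MvPolynomial.C y0)^2 * (MvPolynomial.C (f 0)) + 40 * (MvPolynomial.X 0)^4 * (MvPolynomial.C x0) * (MvPolynomial.C (f 0))^2 - 240 * (MvPolynomial.X 0)^4 * (MvPolynomial.C x0)^2 * (MvPolynomial.C (g 0)) - 240 * (MvPolynomial.X 0)^4 * (MvPolynomial.C x0)^2 * (MvPolynomial.C y0)^2 + 160 * (MvPolynomial.X 0)^4 * (MvPolynomial.C x0)^3 * (MvPolynomial.C (f 0)) + 408 * (MvPolynomial.X 0)^4 * (MvPolynomial.C x0)^5 + 64 * B^2 * (MvPolynomial.C (g 0))^2 + 64 * B^2 * (MvPolynomial.C y0)^2 * (MvPolynomial.C (g 0)) + 64 * B^2 * (MvPolynomial.C y0)^4 + 128 * B^2 * (MvPolynomial.C x0) * (MvPolynomial.C (f 0)) * (MvPolynomial.C (g 0)) +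 64 * B^2 * (MvPolynomial.C x0) * (MvPolynomial.C y0)^2 * (MvPolynomial.C (f 0)) + 64 * B^2 * (MvPolynomial.C x0)^2 * (MvPolynomial.C (f 0))^2 + 128 * B^2 * (MvPolynomial.C x0)^3 * (MvPolynomial.C (g 0)) + 64 * B^2 * (MvPolynomial.C x0)^3 * (MvPolynomial.C y0)^2 + 128 * B^2 * (MvPolynomial.C x0)^4 * (MvPolynomial.C (f 0)) + 64 * B^2 * (MvPolynomial.C x0)^6 + 128 * A * C * (MvPolynomial.C (g 0))^2 + 128 * A * C * (MvPolynomial.C y0)^2 * (MvPolynomial.C (g 0)) + 128 * A * C * (MvPolynomial.C y0)^4 + 256 * A * C * (MvPolynomial.C x0) * (MvPolynomial.C (f 0)) * (MvPolynomial.C (g 0)) + 128 * A * C * (MvPolynomial.C x0) * (MvPolynomial.C y0)^2 * (MvPolynomial.C (f 0)) + 128 * A * C * (MvPolynomial.C x0)^2 * (MvPolynomial.C (f 0))^2 + 256 * A * C * (MvPolynomial.C x0)^3 * (MvPolynomial.C (g 0)) + 128 * A * C * (MvPolynomial.C x0)^3 * (MvPolynomial.C y0)^2 + 256 * A * C * (MvPolynomial.C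 x0)^4 * (MvPolynomial.C (f 0)) + 128 * A * C * (MvPolynomial.C x0)^6) * hQ2


end
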